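/- Define S(z) = a e^z + (1/2) e^{2āz} + ā - z⁻¹(e^z - 1) with a = (1/4)(1 - i/√3), ā = (1/4)(1 + i/√3). Then for all real z with -1 < z < 0, |S(z)| ≤ |z|³ e^z. -/

import Mathlib

noncomputable def a : ℂ := (1/4) * (1 - Complex.I / Real.sqrt 3)
noncomputable def abar : ℂ := (1/4) * (1 + Complex.I / Real.sqrt 3)

noncomputable def S (z : ℂ) : ℂ :=
  if z = 0 then 0 else
    a * Complex.exp z + (1/2) * Complex.exp (2 * abar * z) + abar
      - z⁻¹ * (Complex.exp z - 1)

/-!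
Since `2 * abar = 1 - 2 * a`,
`e^{-z} S(z) = a + ½ e^{-2az} + abar e^{-z} + z⁻¹ (e^{-z} - 1)`.
The relations `a + abar = 1/2` and `a² + abar/2 = 1/6` make the terms of order `< 3` of this
expression cancel, so it is a combination of Taylor remainders of `exp` of order 3 and 4:
`½ R₃(-2az) + abar R₃(-z) + z⁻¹ R₄(-z)`. For `‖z‖ ≤ 1` the standard remainder bound,
together with `‖a‖, ‖abar‖ ≤ 1/2`, bounds it by `(1/9 + 1/9 + 5/96) ‖z‖³ ≤ ‖z‖³`.
-/

open Complex Finset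

noncomputable def expRemainder (n : ℕ) (x : ℂ) : ℂ :=
  exp x - ∑ m ∈ range n, x ^ m / m.factorial

lemma norm_expRemainder_le {x : ℂ} {r : ℝ} (hx : ‖x‖ ≤ r) (hr : r ≤ 1) {n : ℕ} (hn : 0 < n) :
    ‖expRemainder n x‖ ≤ r ^ n * ((n + 1) / (n.factorial * n)) := by
  calc ‖expRemainder n x‖ ≤ ‖x‖ ^ n * ((n + 1) / (n.factorial * n)) := by
        simpa only [expRemainder, Nat.cast_succ, div_eq_mul_inv] using exp_bound (hx.trans hr) hn
    _ ≤ r ^ n * ((n + 1) / (n.factorial * n)) := by gcongr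

lemma a_add_abar : a + abar = 1 / 2 := by
  unfold a abar; ring

lemma a_sq : a ^ 2 = 1 / 6 - abar / 2 := by
  have h : ((Real.sqrt 3 : ℝ) : ℂ) ^ 2 = 3 := by
    rw [← ofReal_pow, Real.sq_sqrt (by norm_num)]; norm_num
  unfold a abar
  field_simp
  linear_combination 4 * h + 12 * I_sq

lemma norm_I_div_sqrt_three_le : ‖I / (Real.sqrt 3 : ℂ)‖ ≤ 1 := by
  rw [norm_div, norm_I, norm_real, Real.norm_of_nonneg (Real.sqrt_nonneg 3)]
  rw [div_le_one (by positivity)]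
  exact Real.one_le_sqrt.mpr (by norm_num)

lemma norm_a_le : ‖a‖ ≤ 1 / 2 := by
  unfold a
  rw [norm_mul]
  have := (norm_sub_le (1 : ℂ) (I / (Real.sqrt 3 : ℂ))).trans
    (add_le_add_right norm_I_div_sqrt_three_le _)
  norm_num at this ⊢
  linarith

lemma norm_abar_le : ‖abar‖ ≤ 1 / 2 := by
  unfold abar
  rw [norm_mul]
  have := (norm_add_le (1 : ℂ) (I / (Real.sqrt 3 : ℂ))).trans
    (add_le_add_right norm_I_div_sqrt_three_le _)
  norm_num at this ⊢
  linarith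

lemma S_eq_exp_mul {z : ℂ} (hz : z ≠ 0) :
    S z = exp z * ((1 / 2) * expRemainder 3 (-2 * a * z) + abar * expRemainder 3 (-z)
      + z⁻¹ * expRemainder 4 (-z)) := by
  have h2 : exp (2 * abar * z) = exp z * exp (-2 * a * z) := by
    rw [← exp_add]; congr 1; linear_combination 2 * z * a_add_abar
  have h1 : exp z * exp (-z) = 1 := by rw [← exp_add]; simp
  have hw : z⁻¹ * z = 1 := inv_mul_cancel₀ hz
  simp only [S, if_neg hz, expRemainder, Finset.sum_range_succ, Finset.sum_range_zero, h2]
  norm_num [Nat.factorial]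
  linear_combination -(abar + z⁻¹) * h1 - (exp z - z * exp z / 2 + z ^ 2 * exp z / 6) * hw
    + (exp z - z * exp z) * a_add_abar + z ^ 2 * exp z * a_sq

lemma norm_S_le {z : ℂ} (hz : ‖z‖ ≤ 1) : ‖S z‖ ≤ ‖z‖ ^ 3 * ‖exp z‖ := by
  rcases eq_or_ne z 0 with rfl | hz0
  · simp [S]
  have h2az : ‖-2 * a * z‖ ≤ ‖z‖ := by
    rw [norm_mul, norm_mul, norm_neg, Complex.norm_two]
    nlinarith [norm_a_le, norm_nonneg z]
  have hR₁ : ‖expRemainder 3 (-2 * a * z)‖ ≤ ‖z‖ ^ 3 * (2 / 9) :=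
    (norm_expRemainder_le h2az hz three_pos).trans_eq (by norm_num [Nat.factorial])
  have hR₂ : ‖expRemainder 3 (-z)‖ ≤ ‖z‖ ^ 3 * (2 / 9) :=
    (norm_expRemainder_le (norm_neg z).le hz three_pos).trans_eq (by norm_num [Nat.factorial])
  have hR₃ : ‖expRemainder 4 (-z)‖ ≤ ‖z‖ ^ 4 * (5 / 96) :=
    (norm_expRemainder_le (norm_neg z).le hz four_pos).trans_eq (by norm_num [Nat.factorial])
  have hzpos : 0 < ‖z‖ := norm_pos_iff.mpr hz0
  rw [S_eq_exp_mul hz0, norm_mul, mul_comm]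
  gcongr
  calc _ ≤ ‖(1 / 2 : ℂ) * expRemainder 3 (-2 * a * z)‖ + ‖abar * expRemainder 3 (-z)‖
        + ‖z⁻¹ * expRemainder 4 (-z)‖ := norm_add₃_le
    _ ≤ 1 / 2 * (‖z‖ ^ 3 * (2 / 9)) + 1 / 2 * (‖z‖ ^ 3 * (2 / 9))
        + ‖z‖⁻¹ * (‖z‖ ^ 4 * (5 / 96)) := by
        simp only [norm_mul, norm_inv]
        gcongr
        · norm_num
        · exact norm_abar_le
    _ = ‖z‖ ^ 3 * (2 / 9 + 5 / 96) := by field_simp; ring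
    _ ≤ ‖z‖ ^ 3 := by nlinarith [pow_pos hzpos 3]

theorem stmt5 : ∀ z : ℝ, -1 < z → z < 0 →
    ‖S z‖ ≤ |z| ^ 3 * Real.exp z := by
  intro z hz₁ hz₀
  have hz : ‖(z : ℂ)‖ ≤ 1 := by
    rw [norm_real, Real.norm_eq_abs, abs_le]; constructor <;> linarith
  simpa [norm_exp] using norm_S_le hz
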